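/- Let k be a field, n ≥ 1, z₁, …, z_n ∈ kˣ, and for each i let I^i, J^i ∈ ℤⁿ and α_i, β_i ∈ kˣ satisfy α_i·z^{I^i} + β_i·z^{J^i} = 0. Fix j₀ ∈ {1, …, n} and define I′^i = I^i, J′^i = J^i, α′_i = α_i, β′_i = β_i for i ≠ j₀, and I′^{j₀} = J^{j₀}, J′^{j₀} = I^{j₀}, α′_{j₀} = β_{j₀}, β′_{j₀} = α_{j₀}. Then det((I′^i_j − J′^i_j)_{i,j}) · (∏_i α′_i) · z^{Σ_i I′^i − e} = det((I^i_j − J^i_j)_{i,j}) · (∏_i α_i) · z^{Σ_i I^i − e}; i.e., the quantity det(Δ^i)·∏α_i·z^{ΣI^i−e} is invariant under exchanging the roles of I^{j₀} and J^{j₀} (together with α_{j₀} and β_{j₀}). -/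

import Mathlib

/-! Exchanging `I^{j₀}` and `J^{j₀}` negates row `j₀` of the matrix `(Iⁱ_j − Jⁱ_j)`, hence its
determinant. In the remaining factors the swap only replaces `α_{j₀} z^{I^{j₀}}` by
`β_{j₀} z^{J^{j₀}}`, which is its negative by the relation at `j₀`; the two signs cancel. -/

/-- For `z = (z₁,…,z_n)` with `z_i ∈ kˣ` and `V ∈ ℤⁿ`, the monomial `z^V = ∏ⱼ zⱼ^{Vⱼ}`
regarded as an element of `k`. -/
def zmonN {k : Type*} [Field k] {n : ℕ} (z : Fin n → kˣ) (V : Fin n → ℤ) : k :=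
  ((∏ j, z j ^ V j : kˣ) : k)

open Finset Function

lemma zmonN_add {k : Type*} [Field k] {n : ℕ} (z : Fin n → kˣ) (V W : Fin n → ℤ) :
    zmonN z (V + W) = zmonN z V * zmonN z W := by
  simp only [zmonN, Pi.add_apply, zpow_add, prod_mul_distrib, Units.val_mul]

lemma Matrix.det_of_sub_update_swap {ι R : Type*} [Fintype ι] [DecidableEq ι] [CommRing R]
    (I J : ι → ι → R) (j₀ : ι) :
    (Matrix.of fun i j => update I j₀ (J j₀) i j - update J j₀ (I j₀) i j).det =
      -(Matrix.of fun i j => I i j - J i j).det := by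
  set M : Matrix ι ι R := Matrix.of fun i j => I i j - J i j
  have hrow : (Matrix.of fun i j => update I j₀ (J j₀) i j - update J j₀ (I j₀) i j) =
      M.updateRow j₀ ((-1 : R) • M j₀) := by
    ext i j
    rcases eq_or_ne i j₀ with rfl | hi
    · simp [M]
    · simp [M, hi]
  rw [hrow, det_updateRow_smul, updateRow_eq_self, neg_one_mul]

lemma zmonN_sum_update_sub_one {k ι : Type*} [Field k] [Fintype ι] [DecidableEq ι] {n : ℕ}
    (z : Fin n → kˣ) (I : ι → Fin n → ℤ) (j₀ : ι) (v : Fin n → ℤ) :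
    zmonN z (∑ i, update I j₀ v i - 1) = zmonN z v * zmonN z (∑ i ∈ univ \ {j₀}, I i - 1) := by
  rw [sum_update_of_mem (mem_univ j₀), add_sub_assoc, zmonN_add]

lemma prod_val_update {k ι : Type*} [Field k] [Fintype ι] [DecidableEq ι]
    (α : ι → kˣ) (j₀ : ι) (b : kˣ) :
    ∏ i, (update α j₀ b i : k) = b * ∏ i ∈ univ \ {j₀}, (α i : k) := by
  rw [← Units.coe_prod, prod_update_of_mem (mem_univ j₀), Units.val_mul, Units.coe_prod]

theorem jacobian_det_swap_invariant_dim_n_general (k : Type*) [Field k] (n : ℕ)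
    (z : Fin n → kˣ) (I J : Fin n → Fin n → ℤ) (α β : Fin n → kˣ)
    (h : ∀ i, (α i : k) * zmonN z (I i) + (β i : k) * zmonN z (J i) = 0)
    (j₀ : Fin n) :
    (((Matrix.of fun i j : Fin n =>
          (Function.update I j₀ (J j₀)) i j - (Function.update J j₀ (I j₀)) i j).det : ℤ) : k) *
        (∏ i, ((Function.update α j₀ (β j₀)) i : k)) *
        zmonN z ((∑ i, Function.update I j₀ (J j₀) i) - 1) =
    (((Matrix.of fun i j : Fin n => I i j - J i j).det : ℤ) : k) *
        (∏ i, (α i : k)) * zmonN z ((∑ i, I i) - 1) := by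
  have hα := prod_val_update α j₀ (α j₀)
  have hI := zmonN_sum_update_sub_one z I j₀ (I j₀)
  rw [update_eq_self] at hα hI
  rw [Matrix.det_of_sub_update_swap, prod_val_update, zmonN_sum_update_sub_one, hα, hI,
    Int.cast_neg]
  linear_combination (-(((Matrix.of fun i j => I i j - J i j).det : ℤ) : k) *
    (∏ i ∈ univ \ {j₀}, (α i : k)) * zmonN z (∑ i ∈ univ \ {j₀}, I i - 1)) * h j₀

/-- The quantity `det(Δⁱ)·∏αᵢ·z^{ΣIⁱ−e}` is invariant under exchanging the roles of
`I^{j₀}` and `J^{j₀}` (together with `α_{j₀}` and `β_{j₀}`). -/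
theorem jacobian_det_swap_invariant_dim_n (k : Type*) [Field k] (n : ℕ) (hn : 1 ≤ n)
    (z : Fin n → kˣ) (I J : Fin n → Fin n → ℤ) (α β : Fin n → kˣ)
    (h : ∀ i, (α i : k) * zmonN z (I i) + (β i : k) * zmonN z (J i) = 0)
    (j₀ : Fin n) :
    (((Matrix.of fun i j : Fin n =>
          (Function.update I j₀ (J j₀)) i j - (Function.update J j₀ (I j₀)) i j).det : ℤ) : k) *
        (∏ i, ((Function.update α j₀ (β j₀)) i : k)) *
        zmonN z ((∑ i, Function.update I j₀ (J j₀) i) - 1) =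
    (((Matrix.of fun i j : Fin n => I i j - J i j).det : ℤ) : k) *
        (∏ i, (α i : k)) * zmonN z ((∑ i, I i) - 1) :=
  jacobian_det_swap_invariant_dim_n_general k n z I J α β h j₀
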